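/- For r = 2, the function F_2 = ∑_{j1 ≤ j2 ≤ 2} S_{(j1,j2)}({2,3}) · S_{(2-j2, 2-j1, 2+j1+j2)} together with H_2 = 5·S_{(3,3)} satisfies: (F_2 + H_2)(x1 + x2 - 𝔻) = 0, where 𝔻 = {2x1, 2x2, x1+x2}; i.e., the Schur polynomial combination S_{(2,2,2)} + 5S_{(1,2,3)} + 6S_{(1,1,4)} + 19S_{(2,4)} + 30S_{(1,5)} + 36S_{(6)} + 5S_{(3,3)}, evaluated supersymmetrically at the difference of the two-letter alphabet {x1,x2} and the three-letter alphabet {2x1, 2x2, x1+x2}, is identically zero as a polynomial in x1, x2. -/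

import Mathlib

noncomputable section

def Scoef {R : Type*} [CommRing R] (f : PowerSeries R) : ℤ → R :=
  fun k => if k < 0 then 0 else PowerSeries.coeff (R := R) k.toNat f

/-- Jacobi–Trudi determinant `S_I = det(S_{i_p+p-q})`. -/
def schurJT {R : Type*} [CommRing R] (f : PowerSeries R) {s : ℕ} (I : Fin s → ℕ) : R :=
  (Matrix.of fun p q : Fin s => Scoef f ((I p : ℤ) + (p : ℤ) - (q : ℤ))).det

abbrev R17 : Type := MvPolynomial (Fin 2) ℤ

def x₁ : R17 := MvPolynomial.X 0
def x₂ : R17 := MvPolynomial.X 1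

/-!
The Jacobi–Trudi determinants only involve the coefficients `S_0, …, S_6` of the generating
series `g = ∏_{b ∈ 𝔻} (1 - b z) / ((1 - x₁ z)(1 - x₂ z))`. Clearing the denominator turns the
defining identity of `g` into the linear recursion
`S_{n+2} = [z^{n+2}] ∏_{b ∈ 𝔻} (1 - b z) + (x₁ + x₂) S_{n+1} - x₁ x₂ S_n`,
which determines these coefficients explicitly; expanding the determinants then leaves a
polynomial identity in `x₁, x₂`.
-/

open PowerSeries

namespace PowerSeries

variable {R : Type*} [CommRing R]

theorem coeff_zero_one_sub_C_mul_X_mul (a : R) (f : R⟦X⟧) :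
    coeff 0 ((1 - C a * X) * f) = coeff 0 f := by
  simp [sub_mul, mul_assoc]

theorem coeff_succ_one_sub_C_mul_X_mul (a : R) (f : R⟦X⟧) (n : ℕ) :
    coeff (n + 1) ((1 - C a * X) * f) = coeff (n + 1) f - a * coeff n f := by
  simp [sub_mul, mul_assoc, coeff_succ_X_mul]

theorem coeff_zero_one_sub_C_mul_X (a : R) : coeff 0 (1 - C a * X) = 1 := by
  simp

theorem coeff_one_one_sub_C_mul_X (a : R) : coeff 1 (1 - C a * X) = -a := by
  simp

theorem coeff_add_two_one_sub_C_mul_X (a : R) (n : ℕ) : coeff (n + 2) (1 - C a * X) = 0 := by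
  simp

section Division

variable {a b : R} {f g : R⟦X⟧} (h : (1 - C a * X) * (1 - C b * X) * g = f)
include h

theorem coeff_zero_eq_of_mul_eq : coeff 0 g = coeff 0 f := by
  simpa only [mul_assoc, coeff_zero_one_sub_C_mul_X_mul] using congrArg (coeff 0) h

theorem coeff_one_eq_of_mul_eq : coeff 1 g = coeff 1 f + (a + b) * coeff 0 g := by
  have h1 := congrArg (coeff 1) h
  simp only [mul_assoc, coeff_succ_one_sub_C_mul_X_mul, coeff_zero_one_sub_C_mul_X_mul] at h1
  linear_combination h1

theorem coeff_add_two_eq_of_mul_eq (n : ℕ) :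
    coeff (n + 2) g = coeff (n + 2) f + (a + b) * coeff (n + 1) g - a * b * coeff n g := by
  have h2 := congrArg (coeff (n + 2)) h
  simp only [mul_assoc, coeff_succ_one_sub_C_mul_X_mul] at h2
  linear_combination h2

end Division

end PowerSeries

section JacobiTrudi

variable {R : Type*} [CommRing R] (f : R⟦X⟧)

theorem schurJT_fin_one (i : ℕ) : schurJT f ![i] = Scoef f i := by
  simp [schurJT]

theorem schurJT_fin_two (i j : ℕ) :
    schurJT f ![i, j] = Scoef f i * Scoef f j - Scoef f (i - 1) * Scoef f (j + 1) := by
  simp [schurJT, Matrix.det_fin_two]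

theorem schurJT_fin_three (i j k : ℕ) :
    schurJT f ![i, j, k] =
      Scoef f i * (Scoef f j * Scoef f k - Scoef f (j - 1) * Scoef f (k + 1))
      - Scoef f (i - 1) * (Scoef f (j + 1) * Scoef f k - Scoef f (j - 1) * Scoef f (k + 2))
      + Scoef f (i - 2) * (Scoef f (j + 1) * Scoef f (k + 1) - Scoef f j * Scoef f (k + 2)) := by
  simp [schurJT, Matrix.det_fin_three]
  ring_nf

end JacobiTrudi

/-- The Thom polynomial of `A_3` for `r = 2`, i.e.
`S_{222} + 5S_{123} + 6S_{114} + 19S_{24} + 30S_{15} + 36S_6 + 5S_{33}`, vanishes when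
evaluated supersymmetrically at `{x1,x2} - {2x1,2x2,x1+x2}`. -/
theorem thom_A3_r2_vanishes_on_III22 (g : PowerSeries R17)
    (hg :
      ((1 - PowerSeries.C (R := R17) x₁ * PowerSeries.X) *
        (1 - PowerSeries.C (R := R17) x₂ * PowerSeries.X)) * g =
      (1 - PowerSeries.C (R := R17) (2 * x₁) * PowerSeries.X) *
        (1 - PowerSeries.C (R := R17) (2 * x₂) * PowerSeries.X) *
        (1 - PowerSeries.C (R := R17) (x₁ + x₂) * PowerSeries.X)) :
    schurJT g ![2,2,2] + 5 * schurJT g ![1,2,3] + 6 * schurJT g ![1,1,4]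
      + 19 * schurJT g ![2,4] + 30 * schurJT g ![1,5] + 36 * schurJT g ![6]
      + 5 * schurJT g ![3,3] = 0 := by
  set F := (1 - C (2 * x₁) * X) * (1 - C (2 * x₂) * X) * (1 - C (x₁ + x₂) * X) with hF
  obtain ⟨f0, f1, f2, f3, f4, f5, f6⟩ :
      coeff 0 F = 1 ∧ coeff 1 F = -3 * (x₁ + x₂) ∧ coeff 2 F = 2 * (x₁ ^ 2 + 4 * x₁ * x₂ + x₂ ^ 2) ∧
      coeff 3 F = -4 * x₁ * x₂ * (x₁ + x₂) ∧ coeff 4 F = 0 ∧ coeff 5 F = 0 ∧ coeff 6 F = 0 := by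
    refine ⟨?_, ?_, ?_, ?_, ?_, ?_, ?_⟩ <;>
    simp only [hF, mul_assoc, zero_add, coeff_zero_one_sub_C_mul_X_mul,
      coeff_succ_one_sub_C_mul_X_mul, coeff_zero_one_sub_C_mul_X, coeff_one_one_sub_C_mul_X,
      coeff_add_two_one_sub_C_mul_X] <;>
    ring
  have hrec := coeff_add_two_eq_of_mul_eq hg
  have c0 : coeff 0 g = 1 := by rw [coeff_zero_eq_of_mul_eq hg, f0]
  have c1 : coeff 1 g = -2 * (x₁ + x₂) := by rw [coeff_one_eq_of_mul_eq hg, f1, c0]; ring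
  have c2 : coeff 2 g = 3 * x₁ * x₂ := by rw [hrec, f2, c1, c0]; ring
  have c3 : coeff 3 g = x₁ * x₂ * (x₁ + x₂) := by rw [hrec, f3, c2, c1]; ring
  have c4 : coeff 4 g = x₁ * x₂ * (x₁ ^ 2 - x₁ * x₂ + x₂ ^ 2) := by rw [hrec, f4, c3, c2]; ring
  have c5 : coeff 5 g = x₁ * x₂ * (x₁ ^ 3 - x₁ ^ 2 * x₂ - x₁ * x₂ ^ 2 + x₂ ^ 3) := by
    rw [hrec, f5, c4, c3]; ring
  have c6 :
      coeff 6 g = x₁ * x₂ * (x₁ ^ 4 - x₁ ^ 3 * x₂ - x₁ ^ 2 * x₂ ^ 2 - x₁ * x₂ ^ 3 + x₂ ^ 4) := by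
    rw [hrec, f6, c5, c4]; ring
  simp only [schurJT_fin_one, schurJT_fin_two, schurJT_fin_three, Scoef, Nat.cast_ofNat,
    Nat.cast_one, Int.reduceLT, Int.reduceSub, Int.reduceAdd, Int.reduceToNat, Int.toNat_zero,
    Int.toNat_one, lt_self_iff_false, Int.neg_neg_iff_pos, zero_lt_one, ↓reduceIte,
    c0, c1, c2, c3, c4, c5, c6]
  ring

end
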